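/- Let P = ⟨n/p_n : n ∈ ℕ⟩ where p_n is the n-th prime. Then P is atomic with A(P) = {n/p_n : n ∈ ℕ}, P is bounded, P contains no stable atom, and 0 is a limit point of P. -/

import Mathlib

/-- A Puiseux monoid: an additive submonoid of ℚ consisting of nonnegative rationals. -/
def PM.Puiseux (P : AddSubmonoid ℚ) : Prop := ∀ x ∈ P, 0 ≤ x

/-- `a` is an atom of `P`. -/
def PM.IsAtom (P : AddSubmonoid ℚ) (a : ℚ) : Prop :=
  a ∈ P ∧ a ≠ 0 ∧ ∀ x ∈ P, ∀ y ∈ P, a = x + y → x = 0 ∨ y = 0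

/-- A factorization of `x` is a multiset of atoms of `P` summing to `x`. -/
def PM.IsFactorization (P : AddSubmonoid ℚ) (x : ℚ) (z : Multiset ℚ) : Prop :=
  (∀ a ∈ z, PM.IsAtom P a) ∧ z.sum = x

/-- The set of lengths of `x`. -/
def PM.Lengths (P : AddSubmonoid ℚ) (x : ℚ) : Set ℕ :=
  {n | ∃ z : Multiset ℚ, PM.IsFactorization P x z ∧ Multiset.card z = n}

/-- `P` is atomic: it is generated by its set of atoms. -/
def PM.Atomic (P : AddSubmonoid ℚ) : Prop :=
  AddSubmonoid.closure {a | PM.IsAtom P a} = P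

/-- The union of sets of lengths `U_k(P)`. -/
def PM.U (P : AddSubmonoid ℚ) (k : ℕ) : Set ℕ :=
  {l | ∃ x ∈ P, k ∈ PM.Lengths P x ∧ l ∈ PM.Lengths P x}

/-!
The generators `n / p_n` have pairwise distinct prime denominators. If `n / p_n` were a sum of
other generators, some `m / p_m` with `m ≠ n` would occur `c ≥ 1` times; everything else in the
equation is `p_m`-adically integral, so `p_m ∣ c`, and then these copies alone already sum to at
least `m ≥ 1 > n / p_n`. Hence the generators are exactly the atoms, and an atom is determined by
its numerator. Finally `p_n / n` is unbounded: if `p_i ≤ c (i + 1)` for all `i`, then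
`M! ≤ p_0 ⋯ p_(M-1) ≤ (c M)# ≤ 4 ^ (c M)` for every `M`, which is absurd.
-/

open Finset Nat

namespace PM

section

variable {A : Set ℚ}
  (hA : ∀ s : Multiset ℚ, (∀ x ∈ s, x ∈ A) → s.sum ∈ A → Multiset.card s = 1)
include hA

theorem zero_notMem_of_forall_card_eq_one : (0 : ℚ) ∉ A := fun h => by
  simpa using hA 0 (by simp) (by simpa using h)

theorem isAtom_closure_of_mem {a : ℚ} (ha : a ∈ A) : IsAtom (AddSubmonoid.closure A) a := by
  refine ⟨AddSubmonoid.subset_closure ha, ?_, fun x hx y hy hxy => ?_⟩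
  · rintro rfl
    exact zero_notMem_of_forall_card_eq_one hA ha
  obtain ⟨s, hsA, rfl⟩ := AddSubmonoid.exists_multiset_of_mem_closure hx
  obtain ⟨t, htA, rfl⟩ := AddSubmonoid.exists_multiset_of_mem_closure hy
  have hcard := hA (s + t) (fun z hz => (Multiset.mem_add.1 hz).elim (hsA z) (htA z))
    (by rwa [Multiset.sum_add, ← hxy])
  rw [Multiset.card_add] at hcard
  rcases Nat.add_eq_one_iff.1 hcard with ⟨hs, -⟩ | ⟨-, ht⟩
  · exact .inl (by rw [Multiset.card_eq_zero.1 hs, Multiset.sum_zero])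
  · exact .inr (by rw [Multiset.card_eq_zero.1 ht, Multiset.sum_zero])

end

theorem mem_of_isAtom_closure {A : Set ℚ} (h0 : (0 : ℚ) ∉ A) {a : ℚ}
    (ha : IsAtom (AddSubmonoid.closure A) a) : a ∈ A := by
  obtain ⟨haP, ha0, hsplit⟩ := ha
  obtain ⟨s, hsA, rfl⟩ := AddSubmonoid.exists_multiset_of_mem_closure haP
  obtain ⟨x, hx⟩ := Multiset.exists_mem_of_ne_zero (s := s)
    (by rintro rfl; exact ha0 Multiset.sum_zero)
  have hsum : s.sum = x + (s.erase x).sum := by rw [← Multiset.sum_cons, Multiset.cons_erase hx]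
  have hrest : (s.erase x).sum ∈ AddSubmonoid.closure A :=
    AddSubmonoid.multiset_sum_mem _ _ fun y hy =>
      AddSubmonoid.subset_closure (hsA y (Multiset.mem_of_mem_erase hy))
  rcases hsplit x (AddSubmonoid.subset_closure (hsA x hx)) _ hrest hsum with h | h
  · exact absurd (h ▸ hsA x hx) h0
  · rw [hsum, h, add_zero]
    exact hsA x hx

theorem setOf_isAtom_closure_eq {A : Set ℚ}
    (hA : ∀ s : Multiset ℚ, (∀ x ∈ s, x ∈ A) → s.sum ∈ A → Multiset.card s = 1) :
    {a | IsAtom (AddSubmonoid.closure A) a} = A :=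
  Set.ext fun _ => ⟨mem_of_isAtom_closure (zero_notMem_of_forall_card_eq_one hA),
    isAtom_closure_of_mem hA⟩

end PM

namespace padicNorm

variable {p : ℕ} [Fact p.Prime]

theorem multiset_sum_le_one {s : Multiset ℚ} (hs : ∀ x ∈ s, padicNorm p x ≤ 1) :
    padicNorm p s.sum ≤ 1 := by
  induction s using Multiset.induction_on with
  | empty => simp
  | cons x s ih =>
    rw [Multiset.forall_mem_cons] at hs
    rw [Multiset.sum_cons]
    exact padicNorm.nonarchimedean.trans (max_le hs.1 (ih hs.2))

theorem natCast_div_le_one (b : ℕ) {r : ℕ} (hr : ¬ p ∣ r) :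
    padicNorm p ((b : ℚ) / r) ≤ 1 := by
  rw [padicNorm.div, (nat_eq_one_iff r).2 hr, div_one]
  exact of_nat b

theorem natCast_div_self {b : ℕ} (hb : ¬ p ∣ b) : padicNorm p ((b : ℚ) / p) = p := by
  rw [padicNorm.div, (nat_eq_one_iff b).2 hb, padicNorm_p_of_prime, one_div, inv_inv]

end padicNorm

section PrimeDenominators

variable {a q : ℕ → ℕ} (hq : Function.Injective q) (hprime : ∀ k, (q k).Prime)
  (hpos : ∀ k, 0 < a k) (hlt : ∀ k, a k < q k)
include hq hprime hpos hlt

theorem eq_of_mem_of_sum_map_div_eq {z : Multiset ℕ} {m n : ℕ}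
    (hz : (z.map fun k => (a k : ℚ) / q k).sum = a n / q n) (hm : m ∈ z) : m = n := by
  by_contra hmn
  have hp := hprime m
  have : Fact (q m).Prime := ⟨hp⟩
  have hqpos : ∀ k, (0 : ℚ) < q k := fun k => by exact_mod_cast (hprime k).pos
  set c := z.count m
  set R := ((z.filter (· ≠ m)).map fun k => (a k : ℚ) / q k).sum
  have hsplit : (c : ℚ) * (a m / q m) + R = a n / q n := by
    rw [← hz, ← Multiset.filter_add_not (· = m) z, Multiset.map_add, Multiset.sum_add,
      Multiset.filter_eq', Multiset.map_replicate, Multiset.sum_replicate, nsmul_eq_mul]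
  have hR : 0 ≤ R := Multiset.sum_nonneg fun x hx => by
    obtain ⟨k, -, rfl⟩ := Multiset.mem_map.1 hx
    exact (div_pos (by exact_mod_cast hpos k) (hqpos k)).le
  have hc : c < q m := by
    have : (c : ℚ) * (a m / q m) < q m * (a m / q m) := calc
      _ ≤ (a n : ℚ) / q n := by linarith
      _ < 1 := (div_lt_one (hqpos n)).2 (by exact_mod_cast hlt n)
      _ ≤ (a m : ℚ) := by exact_mod_cast hpos m
      _ = q m * (a m / q m) := (mul_div_cancel₀ _ (hqpos m).ne').symm
    exact_mod_cast lt_of_mul_lt_mul_right this (div_pos (by exact_mod_cast hpos m) (hqpos m)).le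
  have hnorm_eq : padicNorm (q m) (c * (a m / q m)) = q m := by
    rw [← mul_div_assoc, ← Nat.cast_mul]
    refine padicNorm.natCast_div_self (hp.prime.dvd_mul.not.2 (not_or.2 ⟨?_, ?_⟩))
    exacts [Nat.not_dvd_of_pos_of_lt (Multiset.count_pos.2 hm) hc,
      Nat.not_dvd_of_pos_of_lt (hpos m) (hlt m)]
  have hnot_dvd : ∀ k, k ≠ m → ¬ q m ∣ q k := fun k hk h =>
    hk (hq ((Nat.prime_dvd_prime_iff_eq hp (hprime k)).1 h).symm)
  have hnorm_le : padicNorm (q m) (c * (a m / q m)) ≤ 1 := by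
    rw [eq_sub_of_add_eq hsplit]
    refine padicNorm.sub.trans (max_le (padicNorm.natCast_div_le_one _ (hnot_dvd n (Ne.symm hmn)))
      (padicNorm.multiset_sum_le_one fun x hx => ?_))
    obtain ⟨k, hk, rfl⟩ := Multiset.mem_map.1 hx
    exact padicNorm.natCast_div_le_one _ (hnot_dvd k (Multiset.mem_filter.1 hk).2)
  have : (1 : ℚ) < q m := by exact_mod_cast hp.one_lt
  linarith

theorem card_eq_one_of_sum_map_div_eq {z : Multiset ℕ} {n : ℕ}
    (hz : (z.map fun k => (a k : ℚ) / q k).sum = a n / q n) : Multiset.card z = 1 := by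
  have hrep := Multiset.eq_replicate_card.2 fun m hm =>
    eq_of_mem_of_sum_map_div_eq hq hprime hpos hlt hz hm
  rw [hrep, Multiset.map_replicate, Multiset.sum_replicate, nsmul_eq_mul] at hz
  have hne : (a n : ℚ) / q n ≠ 0 :=
    div_ne_zero (by exact_mod_cast (hpos n).ne') (by exact_mod_cast (hprime n).ne_zero)
  exact_mod_cast (mul_eq_right₀ hne).1 hz

theorem card_eq_one_of_sum_mem_div {s : Multiset ℚ}
    (hs : ∀ x ∈ s, ∃ k, x = (a k : ℚ) / q k)
    (hsum : ∃ n, s.sum = (a n : ℚ) / q n) : Multiset.card s = 1 := by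
  set f : ℕ → ℚ := fun k => (a k : ℚ) / q k
  have hlift : (s.map (Function.invFun f)).map f = s := by
    rw [Multiset.map_map]
    exact (Multiset.map_congr rfl fun x hx => Function.invFun_eq (by
      obtain ⟨k, hk⟩ := hs x hx; exact ⟨k, hk.symm⟩)).trans (Multiset.map_id s)
  obtain ⟨n, hn⟩ := hsum
  rw [← hlift] at hn ⊢
  rw [Multiset.card_map]
  exact card_eq_one_of_sum_map_div_eq hq hprime hpos hlt hn

end PrimeDenominators

namespace Nat

theorem nth_prime_injective : Function.Injective (nth Nat.Prime) :=
  nth_injective infinite_setOfPred_prime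

theorem factorial_le_prod_nth_prime (M : ℕ) : M ! ≤ ∏ i ∈ range M, nth Nat.Prime i := by
  rw [← prod_range_add_one_eq_factorial]
  exact prod_le_prod' fun i _ => (add_two_le_nth_prime i).trans' (by omega)

theorem prod_nth_prime_le_primorial {M N : ℕ} (h : ∀ i < M, nth Nat.Prime i ≤ N) :
    ∏ i ∈ range M, nth Nat.Prime i ≤ primorial N := by
  calc ∏ i ∈ range M, nth Nat.Prime i = ∏ p ∈ (range M).image (nth Nat.Prime), p :=
        (prod_image (f := fun p => p) fun _ _ _ _ hij => nth_prime_injective hij).symm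
    _ ≤ ∏ p ∈ filter Nat.Prime (range (N + 1)), p := by
      refine prod_le_prod_of_subset_of_one_le' ?_ fun p hp _ => (mem_filter.1 hp).2.one_lt.le
      intro p hp
      obtain ⟨i, hi, rfl⟩ := mem_image.1 hp
      exact mem_filter.2
        ⟨mem_range.2 (Nat.lt_succ_of_le (h i (mem_range.1 hi))), prime_nth_prime i⟩

theorem exists_mul_succ_lt_nth_prime (c : ℕ) : ∃ n, c * (n + 1) < nth Nat.Prime n := by
  by_contra! h
  obtain ⟨M, hM⟩ := (eventually_pow_lt_factorial_sub (4 ^ c) 0).exists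
  have : M ! ≤ (4 ^ c) ^ M := calc
    M ! ≤ ∏ i ∈ range M, nth Nat.Prime i := factorial_le_prod_nth_prime M
    _ ≤ primorial (c * M) := prod_nth_prime_le_primorial fun i hi =>
      (h i).trans (Nat.mul_le_mul_left c hi)
    _ ≤ 4 ^ (c * M) := primorial_le_four_pow _
    _ = (4 ^ c) ^ M := pow_mul 4 c M
  simp only [Nat.sub_zero] at hM
  omega

end Nat

theorem exists_succ_div_nth_prime_lt {ε : ℚ} (hε : 0 < ε) :
    ∃ n : ℕ, ((n + 1 : ℕ) : ℚ) / nth Nat.Prime n < ε := by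
  obtain ⟨c, hc⟩ := exists_nat_gt ε⁻¹
  obtain ⟨n, hn⟩ := exists_mul_succ_lt_nth_prime c
  have hn' : (c : ℚ) * (n + 1) < nth Nat.Prime n := by exact_mod_cast hn
  have hεc : 1 < c * ε := by rwa [inv_lt_iff_one_lt_mul₀ hε] at hc
  refine ⟨n, (div_lt_iff₀ (by exact_mod_cast (prime_nth_prime n).pos)).2 ?_⟩
  push_cast
  nlinarith

theorem Rat.num_natCast_div_prime {b p : ℕ} (hp : p.Prime) (hb : ¬ p ∣ b) :
    ((b : ℚ) / p).num = b := by
  have := Rat.num_div_eq_of_coprime (a := b) (b := p) (by exact_mod_cast hp.pos)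
    (by simpa using (Nat.coprime_comm.1 ((Nat.Prime.coprime_iff_not_dvd hp).2 hb)))
  simpa using this

theorem stmt17 :
    let A : Set ℚ := {q | ∃ n : ℕ, q = ((n + 1 : ℕ) : ℚ) / (Nat.nth Nat.Prime n)}
    let P := AddSubmonoid.closure A
    PM.Atomic P ∧ {a : ℚ | PM.IsAtom P a} = A ∧
      BddAbove A ∧
      (∀ m : ℤ, {a : ℚ | PM.IsAtom P a ∧ a.num = m}.Finite) ∧
      ∀ ε : ℚ, 0 < ε → ∃ x ∈ P, x ≠ 0 ∧ x < ε := by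
  intro A P
  have hlt : ∀ n, n + 1 < nth Nat.Prime n := add_two_le_nth_prime
  have hatoms : {a | PM.IsAtom P a} = A := PM.setOf_isAtom_closure_eq fun s hs hsum =>
    card_eq_one_of_sum_mem_div nth_prime_injective prime_nth_prime succ_pos hlt hs hsum
  have hatom : ∀ n, PM.IsAtom P (((n + 1 : ℕ) : ℚ) / nth Nat.Prime n) := fun n =>
    (Set.ext_iff.1 hatoms _).2 ⟨n, rfl⟩
  refine ⟨congrArg AddSubmonoid.closure hatoms, hatoms, ⟨1, ?_⟩, fun m => ?_,
    fun ε hε => ?_⟩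
  · rintro _ ⟨n, rfl⟩
    exact ((div_lt_one (by exact_mod_cast (prime_nth_prime n).pos)).2 (by exact_mod_cast hlt n)).le
  · refine Set.Subsingleton.finite ?_
    rintro x ⟨hx, rfl⟩ y ⟨hy, hxy⟩
    obtain ⟨n₁, rfl⟩ : x ∈ A := hatoms ▸ hx
    obtain ⟨n₂, rfl⟩ : y ∈ A := hatoms ▸ hy
    have hnum (n : ℕ) : (((n + 1 : ℕ) : ℚ) / nth Nat.Prime n).num = ((n + 1 : ℕ) : ℤ) :=
      Rat.num_natCast_div_prime (prime_nth_prime n) fun h =>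
        (Nat.le_of_dvd n.succ_pos h).not_gt (hlt n)
    rw [hnum, hnum, Nat.cast_inj, Nat.add_right_cancel_iff] at hxy
    rw [hxy]
  · obtain ⟨n, hn⟩ := exists_succ_div_nth_prime_lt hε
    exact ⟨_, (hatom n).1, (hatom n).2.1, hn⟩
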